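/- arXiv:2511.11711 — 2 statements merged into one kernel-verified Lean document; each statement's English description precedes it below -/
import Mathlib

section
/- Let Σ be a real symmetric positive definite p×p matrix and S a real symmetric positive semidefinite p×p matrix, and let G be the 2p×2p block matrix G = [[Σ, Σ−S],[Σ−S, Σ]]. Then G is positive semidefinite if and only if 2Σ − S is positive semidefinite. -/
/-!
With `H = [[1, 1], [1, -1]]` one has `H [[A, B], [B, A]] Hᴴ = 2 • diag(A + B, A - B)` and,
since `H² = 2`, also `H diag(A + B, A - B) Hᴴ = 2 • [[A, B], [B, A]]`. Congruence preserves
positive semidefiniteness, so `[[A, B], [B, A]] ⪰ 0` iff `A + B ⪰ 0` and `A - B ⪰ 0`.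
For `A = Σ`, `B = Σ - S` these are `2Σ - S ⪰ 0` and `S ⪰ 0`.
-/

open Matrix

namespace Matrix

variable {m n : Type*} [Fintype m] [Fintype n] [DecidableEq m] [DecidableEq n]

theorem posSemidef_fromBlocks_zero_iff {R : Type*} [Ring R] [PartialOrder R] [StarRing R]
    [AddLeftMono R] {P : Matrix m m R} {Q : Matrix n n R} :
    (fromBlocks P 0 0 Q).PosSemidef ↔ P.PosSemidef ∧ Q.PosSemidef := by
  refine ⟨fun h => ⟨h.submatrix Sum.inl, h.submatrix Sum.inr⟩, fun ⟨hP, hQ⟩ => ?_⟩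
  have hP' := hP.conjTranspose_mul_mul_same (fromCols (1 : Matrix m m R) (0 : Matrix m n R))
  have hQ' := hQ.conjTranspose_mul_mul_same (fromCols (0 : Matrix n m R) (1 : Matrix n n R))
  convert hP'.add hQ' using 1
  ext (i | i) (j | j) <;>
    simp [conjTranspose_fromCols_eq_fromRows_conjTranspose, fromRows_mul, mul_fromCols]

theorem fromBlocks_hadamard_conj {R : Type*} [Ring R] [StarRing R] (A B C D : Matrix n n R) :
    fromBlocks 1 1 1 (-1) * fromBlocks A B C D * (fromBlocks 1 1 1 (-1))ᴴ =
      fromBlocks (A + B + C + D) (A - B + C - D) (A + B - C - D) (A - B - C + D) := by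
  simp only [fromBlocks_conjTranspose, fromBlocks_multiply, conjTranspose_one, conjTranspose_neg,
    Matrix.one_mul, Matrix.mul_one, Matrix.neg_mul, Matrix.mul_neg, fromBlocks_inj]
  refine ⟨?_, ?_, ?_, ?_⟩ <;> abel

section RCLike

open scoped ComplexOrder

variable {𝕜 : Type*} [RCLike 𝕜]

theorem PosSemidef.of_mul_mul_conjTranspose_eq_smul {ι : Type*} [Fintype ι] {G D : Matrix ι ι 𝕜}
    (hG : G.PosSemidef) (M : Matrix ι ι 𝕜) {c : 𝕜} (hc : 0 < c) (h : M * G * Mᴴ = c • D) :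
    D.PosSemidef := by
  simpa [h, smul_smul, inv_mul_cancel₀ hc.ne'] using
    (hG.mul_mul_conjTranspose_same M).smul (inv_nonneg.mpr hc.le)

theorem posSemidef_fromBlocks_self_iff (A B : Matrix n n 𝕜) :
    (fromBlocks A B B A).PosSemidef ↔ (A + B).PosSemidef ∧ (A - B).PosSemidef := by
  have hG : fromBlocks 1 1 1 (-1) * fromBlocks A B B A * (fromBlocks 1 1 1 (-1))ᴴ =
      (2 : 𝕜) • fromBlocks (A + B) 0 0 (A - B) := by
    rw [fromBlocks_hadamard_conj, fromBlocks_smul]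
    congr 1 <;> module
  have hD : fromBlocks 1 1 1 (-1) * fromBlocks (A + B) 0 0 (A - B) * (fromBlocks 1 1 1 (-1))ᴴ =
      (2 : 𝕜) • fromBlocks A B B A := by
    rw [fromBlocks_hadamard_conj, fromBlocks_smul]
    congr 1 <;> module
  rw [← posSemidef_fromBlocks_zero_iff]
  exact ⟨fun h => h.of_mul_mul_conjTranspose_eq_smul _ two_pos hG,
    fun h => h.of_mul_mul_conjTranspose_eq_smul _ two_pos hD⟩

end RCLike

end Matrix

theorem knockoff_jointCov_posSemidef_iff_general {p : ℕ} (Sig S : Matrix (Fin p) (Fin p) ℝ)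
    (hS : S.PosSemidef) :
    (Matrix.fromBlocks Sig (Sig - S) (Sig - S) Sig).PosSemidef ↔
      ((2 : ℝ) • Sig - S).PosSemidef := by
  have hsum : Sig + (Sig - S) = (2 : ℝ) • Sig - S := by module
  rw [posSemidef_fromBlocks_self_iff, hsum, sub_sub_cancel]
  exact and_iff_left hS

/-- **Positive semidefiniteness of the joint knockoff covariance matrix.**
Let `Σ` be a real symmetric positive definite `p×p` matrix and `S` a real symmetric
positive semidefinite `p×p` matrix, and let `G` be the `2p×2p` block matrix
`G = [[Σ, Σ−S],[Σ−S, Σ]]`.  Then `G` is positive semidefinite if and only if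
`2Σ − S` is positive semidefinite. -/
theorem knockoff_jointCov_posSemidef_iff {p : ℕ} (Sig S : Matrix (Fin p) (Fin p) ℝ)
    (hSig : Sig.PosDef) (hS : S.PosSemidef) :
    (Matrix.fromBlocks Sig (Sig - S) (Sig - S) Sig).PosSemidef ↔
      ((2 : ℝ) • Sig - S).PosSemidef :=
  knockoff_jointCov_posSemidef_iff_general Sig S hS
end

section
/- Let p be a positive integer, μ ∈ ℝ^p, Σ a real symmetric positive definite p×p matrix, and S a real diagonal positive semidefinite p×p matrix with 2Σ − S positive semidefinite, and let G = [[Σ, Σ−S],[Σ−S, Σ]], which is positive semidefinite. Let ν be the multivariate Gaussian measure on ℝ^{2p} with mean vector (μ, μ) and covariance G. For any subset A ⊆ {1, …, p}, let σ_A : ℝ^{2p} → ℝ^{2p} be the linear map permuting coordinates by swapping coordinate j with coordinate p + j for every j ∈ A. Then the pushforward of ν under σ_A equals ν. -/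
open MeasureTheory Matrix

/-- `ν` is the multivariate Gaussian measure on `ℝ^d` (modelled as `d → ℝ`) with mean
vector `m` and covariance matrix `G`, characterized (Cramér–Wold) by the requirement
that every linear functional `x ↦ ∑ i, a i * x i` pushes `ν` forward to the real
Gaussian with mean `⟪a, m⟫` and variance `aᵀ G a`. -/
def IsMultivariateGaussian {d : Type*} [Fintype d] (ν : Measure (d → ℝ))
    (m : d → ℝ) (G : Matrix d d ℝ) : Prop :=
  IsProbabilityMeasure ν ∧
    ∀ a : d → ℝ,
      Measure.map (fun x => ∑ i, a i * x i) ν =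
        ProbabilityTheory.gaussianReal (∑ i, a i * m i)
          (Real.toNNReal (a ⬝ᵥ G.mulVec a))

/-- The coordinate-swap map on `Fin p ⊕ Fin p` exchanging coordinate `j` with
coordinate `p + j` for every `j ∈ A` and fixing all other coordinates. -/
def knockoffSwapFun {p : ℕ} (A : Finset (Fin p)) : Fin p ⊕ Fin p → Fin p ⊕ Fin p
  | .inl j => if j ∈ A then .inr j else .inl j
  | .inr j => if j ∈ A then .inl j else .inr j

/-! The swap is a permutation of coordinates, and such a permutation carries the Gaussian with
mean `m` and covariance `G` to the Gaussian with the permuted mean and covariance; since a Gaussian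
is determined by its mean and covariance (Cramér–Wold), it suffices that `(μ, μ)` and `G` are
swap-invariant. For `G`, an entry `(j, k)` with exactly one of `j, k` in `A` moves between a `Σ`
block and a `Σ − S` block, and these agree there because `S` is diagonal and `j ≠ k`. -/

theorem MeasureTheory.Measure.ext_of_forall_map_strongDual {E : Type*} [NormedAddCommGroup E]
    [NormedSpace ℝ E] [CompleteSpace E] [MeasurableSpace E] [BorelSpace E]
    [SecondCountableTopology E] {μ ν : Measure E} [IsFiniteMeasure μ] [IsFiniteMeasure ν]
    (h : ∀ L : StrongDual ℝ E, μ.map L = ν.map L) : μ = ν :=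
  Measure.ext_of_charFunDual <| funext fun L => by
    rw [charFunDual_eq_charFun_map_one, charFunDual_eq_charFun_map_one, h]

theorem StrongDual.apply_eq_sum_mul {d : Type*} [Fintype d] [DecidableEq d]
    (L : StrongDual ℝ (d → ℝ)) (x : d → ℝ) : L x = ∑ i, L (Pi.single i 1) * x i := by
  conv_lhs => rw [← Finset.univ_sum_single x]
  simp_rw [map_sum, mul_comm _ (x _), ← smul_eq_mul, ← map_smul, ← Pi.single_smul', smul_eq_mul,
    mul_one]

theorem MeasureTheory.Measure.ext_of_forall_map_sum_mul {d : Type*} [Fintype d]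
    {μ ν : Measure (d → ℝ)} [IsFiniteMeasure μ] [IsFiniteMeasure ν]
    (h : ∀ a : d → ℝ, μ.map (fun x => ∑ i, a i * x i) = ν.map (fun x => ∑ i, a i * x i)) :
    μ = ν := by
  classical
  refine Measure.ext_of_forall_map_strongDual fun L => ?_
  rw [funext (StrongDual.apply_eq_sum_mul L), h]

section MultivariateGaussian

variable {d d' : Type*} [Fintype d] [Fintype d'] {ν : Measure (d → ℝ)} {m : d → ℝ}
  {G : Matrix d d ℝ}

theorem IsMultivariateGaussian.unique {ν' : Measure (d → ℝ)}
    (h : IsMultivariateGaussian ν m G) (h' : IsMultivariateGaussian ν' m G) : ν = ν' := by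
  have := h.1
  have := h'.1
  exact Measure.ext_of_forall_map_sum_mul fun a => by rw [h.2, h'.2]

theorem IsMultivariateGaussian.map_comp_equiv (h : IsMultivariateGaussian ν m G) (e : d' ≃ d) :
    IsMultivariateGaussian (ν.map fun x => x ∘ e) (m ∘ e) (G.submatrix e e) := by
  have := h.1
  have hcomp : Measurable fun x : d → ℝ => x ∘ e := by fun_prop
  refine ⟨Measure.isProbabilityMeasure_map hcomp.aemeasurable, fun a => ?_⟩
  have hsum : (fun x : d' → ℝ => ∑ i, a i * x i) ∘ (fun x : d → ℝ => x ∘ e) =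
      fun x => ∑ i, (a ∘ e.symm) i * x i :=
    funext fun x => (comp_equiv_symm_dotProduct a x e).symm
  rw [Measure.map_map (by fun_prop) hcomp, hsum, h.2]
  congr 2
  · exact comp_equiv_symm_dotProduct a m e
  · rw [submatrix_mulVec_equiv, ← comp_equiv_symm_dotProduct]

end MultivariateGaussian

section KnockoffSwap

variable {p : ℕ} (A : Finset (Fin p))

theorem knockoffSwapFun_involutive : Function.Involutive (knockoffSwapFun A) := by
  rintro (j | j) <;> by_cases hj : j ∈ A <;> simp [knockoffSwapFun, hj]

def knockoffSwap : Equiv.Perm (Fin p ⊕ Fin p) :=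
  (knockoffSwapFun_involutive A).toPerm

theorem sum_elim_comp_knockoffSwap (μ : Fin p → ℝ) :
    Sum.elim μ μ ∘ knockoffSwap A = Sum.elim μ μ := by
  funext j
  rcases j with j | j <;> by_cases hj : j ∈ A <;> simp [knockoffSwap, knockoffSwapFun, hj]

theorem fromBlocks_submatrix_knockoffSwap {B C : Matrix (Fin p) (Fin p) ℝ} (hBC : (B - C).IsDiag) :
    (fromBlocks B C C B).submatrix (knockoffSwap A) (knockoffSwap A) = fromBlocks B C C B := by
  have hBC' : ∀ {i j}, i ≠ j → B i j = C i j := fun hij => sub_eq_zero.mp (hBC hij)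
  ext (i | i) (j | j) <;> by_cases hi : i ∈ A <;> by_cases hj : j ∈ A <;>
    simp only [knockoffSwap, Function.Involutive.coe_toPerm, knockoffSwapFun, hi, hj,
      ↓reduceIte, submatrix_apply, fromBlocks_apply₁₁, fromBlocks_apply₁₂, fromBlocks_apply₂₁,
      fromBlocks_apply₂₂] <;> grind

end KnockoffSwap

theorem gaussian_knockoff_swap_invariant_general {p : ℕ}
    (μ : Fin p → ℝ) (Sig S : Matrix (Fin p) (Fin p) ℝ)
    (hSdiag : S.IsDiag)
    (ν : Measure ((Fin p ⊕ Fin p) → ℝ))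
    (hν : IsMultivariateGaussian ν (Sum.elim μ μ)
      (Matrix.fromBlocks Sig (Sig - S) (Sig - S) Sig))
    (A : Finset (Fin p)) :
    Measure.map (fun x => x ∘ knockoffSwapFun A) ν = ν := by
  have hswap := hν.map_comp_equiv (knockoffSwap A)
  rw [sum_elim_comp_knockoffSwap,
    fromBlocks_submatrix_knockoffSwap A (by rwa [sub_sub_cancel])] at hswap
  exact hswap.unique hν

/-- **Swap-exchangeability of the joint Gaussian knockoff distribution.**
Let `p` be a positive integer, `μ ∈ ℝ^p`, `Σ` a real symmetric positive definite
`p×p` matrix, and `S` a real diagonal positive semidefinite `p×p` matrix with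
`2Σ − S` positive semidefinite, and let `G = [[Σ, Σ−S],[Σ−S, Σ]]` (which is then
positive semidefinite).  Let `ν` be the multivariate Gaussian measure on `ℝ^{2p}`
with mean `(μ, μ)` and covariance `G`.  For every subset `A ⊆ {1, …, p}`, the
pushforward of `ν` under the linear map `σ_A : ℝ^{2p} → ℝ^{2p}` that swaps
coordinate `j` with coordinate `p + j` for each `j ∈ A` equals `ν`. -/
theorem gaussian_knockoff_swap_invariant {p : ℕ} (hp : 0 < p)
    (μ : Fin p → ℝ) (Sig S : Matrix (Fin p) (Fin p) ℝ)
    (hSig : Sig.PosDef) (hSdiag : S.IsDiag) (hSpsd : S.PosSemidef)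
    (h2 : ((2 : ℝ) • Sig - S).PosSemidef)
    (ν : Measure ((Fin p ⊕ Fin p) → ℝ))
    (hν : IsMultivariateGaussian ν (Sum.elim μ μ)
      (Matrix.fromBlocks Sig (Sig - S) (Sig - S) Sig))
    (A : Finset (Fin p)) :
    Measure.map (fun x => x ∘ knockoffSwapFun A) ν = ν :=
  gaussian_knockoff_swap_invariant_general μ Sig S hSdiag ν hν A
end
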